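/- arXiv:2305.02295 — 3 statements merged into one kernel-verified Lean document; each statement's English description precedes it below -/
import Mathlib

section
/- Consider initial configurations of consensus given by input assignments I : Process → Bool over a finite nonempty set of processes. Assume validity: if all inputs are b then the failure-free decision is b. Assume the indistinguishability axiom: the p-silent decision from two input assignments agreeing outside p is the same. Then there exists an input assignment I and a process p such that the failure-free decision from I differs from the p-silent decision from I. -/
/-!
Suppose, for contradiction, that the failure-free decision always equals every `p`-silent
decision. Then flipping the input of a single process `p` cannot change the failure-free
decision, since it cannot change the `p`-silent one. Any two input assignments are joined by
finitely many such flips, so the failure-free decision would be constant, contradicting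
validity on the all-`false` and all-`true` inputs.
-/

open Function

theorem apply_eq_apply_of_forall_apply_update_eq {ι β γ : Type*} [Finite ι] [DecidableEq ι]
    {f : (ι → β) → γ} (hf : ∀ I p b, f (update I p b) = f I) (I I' : ι → β) :
    f I = f I' := by
  have : Fintype ι := Fintype.ofFinite ι
  suffices key : ∀ s : Finset ι, ∀ J, (∀ q ∉ s, J q = I' q) → f J = f I' from
    key Finset.univ I fun q hq => absurd (Finset.mem_univ q) hq
  intro s
  induction s using Finset.induction_on with
  | empty => exact fun J hJ => congrArg f (funext fun q => hJ q (Finset.notMem_empty q))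
  | insert a s _ ih =>
    intro J hJ
    rw [← hf J a (I' a)]
    refine ih _ fun q hq => ?_
    rcases eq_or_ne q a with rfl | hqa
    · exact update_self ..
    · rw [update_of_ne hqa]
      exact hJ q (by simp [hq, hqa])

theorem apply_update_eq_of_forall_eq_silent {ι α β : Type*} [DecidableEq ι]
    {ff : (ι → α) → β} {sil : (ι → α) → ι → β} (hdep : ∀ I p, ff I = sil I p)
    (hindist : ∀ (I I' : ι → α) (p : ι), (∀ q, q ≠ p → I q = I' q) → sil I p = sil I' p)
    (I : ι → α) (p : ι) (b : α) : ff (update I p b) = ff I := by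
  rw [hdep, hdep I p]
  exact hindist _ _ p fun q hq => update_of_ne hq ..

theorem exists_dependent_initial_general (n : ℕ)
    (ff : (Fin n → Bool) → Bool) (sil : (Fin n → Bool) → Fin n → Bool)
    (hvalid : ∀ b : Bool, ff (fun _ => b) = b)
    (hindist : ∀ (I I' : Fin n → Bool) (p : Fin n),
      (∀ q, q ≠ p → I q = I' q) → sil I p = sil I' p) :
    ∃ (I : Fin n → Bool) (p : Fin n), ff I ≠ sil I p := by
  by_contra! hdep
  have hconst := apply_eq_apply_of_forall_apply_update_eq
    (apply_update_eq_of_forall_eq_silent hdep hindist) (fun _ => false) (fun _ => true)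
  simp [hvalid] at hconst

/-- Lemma 2: existence of a p-dependent initial configuration. Given validity and
the indistinguishability of p-silent decisions from input assignments agreeing
outside p, there is an input assignment I and process p such that the failure-free
decision from I differs from the p-silent decision from I. -/
theorem exists_dependent_initial (n : ℕ) (hn : 1 ≤ n)
    (ff : (Fin n → Bool) → Bool) (sil : (Fin n → Bool) → Fin n → Bool)
    (hvalid : ∀ b : Bool, ff (fun _ => b) = b)
    (hindist : ∀ (I I' : Fin n → Bool) (p : Fin n),
      (∀ q, q ≠ p → I q = I' q) → sil I p = sil I' p) :
    ∃ (I : Fin n → Bool) (p : Fin n), ff I ≠ sil I p :=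
  exists_dependent_initial_general n ff sil hvalid hindist
end

section
/- Abstract inductive step: Let Config be a type, step : Config → Process → Finset Process → Config the round transition where step c p P drops p's messages to the set P, ff : Config → Bool the failure-free decision, and sil : Config → Process → Bool the p-silent decision. Assume the axioms: (1) sil c p = sil (step c p univ) p; (2) for any P, sil (step c p P) q = sil (step c p P') q whenever P and P' differ only in whether q ∈ P (indistinguishability for the process that did or didn't receive p's message). If c is p-dependent (ff c ≠ sil c p) and ff (step c p ∅) = ff c (receiving all messages is the failure-free round), then there exist q and P such that step c p P is q-dependent (ff (step c p P) ≠ sil (step c p P) q). -/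
/-- Lemma 3 (abstract inductive step): from a p-dependent configuration c, some
one-round successor obtained by dropping p's messages to some set P is q-dependent
for some process q. -/
theorem exists_dependent_successor {Config : Type*} {n : ℕ}
    (step : Config → Fin n → Finset (Fin n) → Config)
    (ff : Config → Bool) (sil : Config → Fin n → Bool)
    (c : Config) (p : Fin n)
    (h1 : sil c p = sil (step c p Finset.univ) p)
    (h2 : ∀ (P P' : Finset (Fin n)) (q : Fin n),
      (∀ r, r ≠ q → (r ∈ P ↔ r ∈ P')) → sil (step c p P) q = sil (step c p P') q)
    (hdep : ff c ≠ sil c p)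
    (hff : ff (step c p ∅) = ff c) :
    ∃ (q : Fin n) (P : Finset (Fin n)),
      ff (step c p P) ≠ sil (step c p P) q := by
  by_cases hu : ff (step c p Finset.univ) = sil (step c p Finset.univ) p
  swap
  · exact ⟨p, Finset.univ, hu⟩
  -- ff (step c p univ) = sil c p ≠ ff c = ff (step c p ∅)
  have key : ff (step c p Finset.univ) ≠ ff (step c p ∅) := by
    rw [hu, ← h1, hff]; exact fun h => hdep h.symm
  -- descend from univ to ∅
  suffices H : ∀ (P : Finset (Fin n)), ff (step c p P) ≠ ff (step c p ∅) →
      ∃ (q : Fin n) (P' : Finset (Fin n)), ff (step c p P') ≠ sil (step c p P') q from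
    H Finset.univ key
  intro P
  induction P using Finset.strongInduction with
  | _ P ih =>
    intro hne
    rcases P.eq_empty_or_nonempty with rfl | ⟨q, hq⟩
    · exact absurd rfl hne
    · by_cases h : ff (step c p P) = ff (step c p (P.erase q))
      · exact ih (P.erase q) (Finset.erase_ssubset hq) (h ▸ hne)
      · have hsil : sil (step c p P) q = sil (step c p (P.erase q)) q := by
          apply h2
          intro r hr
          simp [Finset.mem_erase, hr]
        by_cases hd : ff (step c p P) = sil (step c p P) q
        · exact ⟨q, P.erase q, by rw [← hsil, ← hd]; exact fun e => h e.symm⟩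
        · exact ⟨q, P, hd⟩
end

section
/- Let n > 2. Model one get-core simulated round in the fail-to-receive system: in each of three phases every process receives from at least n−2 of the other n−1 processes. Formally, let R1, R2, R3 : Fin n → Finset (Fin n) with R_i(p) ⊆ univ \ {p} and |R_i(p)| ≥ n − 2 for all p and i. Define knowledge after phase 1 as K1(p) = R1(p) ∪ {p}; after phase 2, K2(p) = ⋃_{q ∈ R2(p) ∪ {p}} K1(q); after phase 3, K3(p) = ⋃_{q ∈ R3(p) ∪ {p}} K2(q). Then there exists a set S of at least n − 1 processes such that S ⊆ K3(p) for every process p. -/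
/-!
Every phase-2 knowledge set `{q} ∪ R2 q` has at least `n - 1` elements, so by averaging some
process `l` lies in at least `n - 1` of them. Take `S = {l} ∪ R1 l`, the phase-1 knowledge of `l`.
In phase 3 each `p` hears from `n - 1` processes, and two sets of size `n - 1 > n / 2` meet, so
`p` hears from someone who learnt `S` from `l` in phase 2.
-/

open Finset

theorem Finset.exists_le_card_filter_mem_of_le_card {α : Type*} [Fintype α] [Nonempty α]
    [DecidableEq α] {m : ℕ} (f : α → Finset α) (hf : ∀ a, m ≤ #(f a)) :
    ∃ b, m ≤ #{a | b ∈ f a} := by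
  have hcount : ∑ a, #(f a) = ∑ b, #{a | b ∈ f a} := by
    simpa [bipartiteAbove, bipartiteBelow] using
      sum_card_bipartiteAbove_eq_sum_card_bipartiteBelow (s := univ) (t := univ)
        (fun a b => b ∈ f a)
  obtain ⟨b, -, hb⟩ := exists_le_of_sum_le univ_nonempty <|
    (sum_le_sum fun a _ => hf a).trans hcount.le
  exact ⟨b, hb⟩

theorem Finset.sub_one_le_card_insert {α : Type*} [Fintype α] [DecidableEq α] {s : Finset α}
    {a : α} {n : ℕ} (hs : s ⊆ univ \ {a}) (hcard : n - 2 ≤ #s) : n - 1 ≤ #(insert a s) := by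
  have ha : a ∉ s := fun ha => by simpa using hs ha
  rw [card_insert_of_notMem ha]
  omega

/-- Get-core lemma: after three phases in the fail-to-receive model (each process
hears from at least n - 2 of the other n - 1 processes each phase), there is a set
S of at least n - 1 processes whose phase-1 values are known to everyone. -/
theorem get_core (n : ℕ) (hn : 2 < n) (R1 R2 R3 : Fin n → Finset (Fin n))
    (hsub1 : ∀ p, R1 p ⊆ univ \ {p}) (hcard1 : ∀ p, n - 2 ≤ (R1 p).card)
    (hsub2 : ∀ p, R2 p ⊆ univ \ {p}) (hcard2 : ∀ p, n - 2 ≤ (R2 p).card)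
    (hsub3 : ∀ p, R3 p ⊆ univ \ {p}) (hcard3 : ∀ p, n - 2 ≤ (R3 p).card) :
    ∃ S : Finset (Fin n), n - 1 ≤ S.card ∧
      ∀ p : Fin n, S ⊆ (insert p (R3 p)).biUnion
        (fun q => (insert q (R2 q)).biUnion (fun r => insert r (R1 r))) := by
  have : Nonempty (Fin n) := ⟨⟨0, by omega⟩⟩
  obtain ⟨l, hl⟩ := exists_le_card_filter_mem_of_le_card (fun q => insert q (R2 q))
    fun q => sub_one_le_card_insert (hsub2 q) (hcard2 q)
  refine ⟨insert l (R1 l), sub_one_le_card_insert (hsub1 l) (hcard1 l), fun p => ?_⟩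
  have hp := sub_one_le_card_insert (hsub3 p) (hcard3 p)
  obtain ⟨q, hq⟩ : (insert p (R3 p) ∩ ({q | l ∈ insert q (R2 q)} : Finset _)).Nonempty :=
    inter_nonempty_of_card_lt_card_add_card (subset_univ _) (subset_univ _)
      (by rw [card_univ, Fintype.card_fin]; omega)
  rw [mem_inter, mem_filter] at hq
  exact fun x hx => mem_biUnion.2 ⟨q, hq.1, mem_biUnion.2 ⟨l, hq.2.2, hx⟩⟩
end
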